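/- Let S_1,...,S_N be a sequence over a field F, let {g_1 = (g_11, g_12), g_2 = (g_21, g_22)} be a minimal Gröbner basis (top ordering) of the row space M of [[x^{N+1}, 0], [−(S_N x^N + ... + S_1 x), 1]] with g_12(0) = 0 and g_22(0) ≠ 0, and set L̃ = deg g_1, L = deg g_2. Then L is the shortest length of a feedback polynomial for S_1,...,S_N, g_22 is a shortest feedback polynomial, and the set of all shortest feedback polynomials is exactly {a·g_22 + b·g_12 : 0 ≠ a ∈ F, b ∈ F[x], deg b ≤ L − L̃}. -/

import Mathlib

/-!
Membership of `v` in the row space `M` means `X ^ (N + 1) ∣ v₀ + v₁ · S(x)`, so `λ` is a feedback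
polynomial of length `L` exactly when `λ(0) ≠ 0` and `λ = v₁` for some `v ∈ M` whose entries have
degree `≤ L`. Since `{g₁, g₂}` is a Gröbner basis, division by it writes every `v ∈ M` as
`a • g₁ + b • g₂` with neither summand having a larger leading monomial than `v` (the Predictable
Leading Monomial property). As `g₁₂(0) = 0`, comparing constant terms of second entries gives
`b(0) ≠ 0`, hence `deg b + L ≤ deg v`: this is the minimality of `L = deg g₂`, and for feedback
polynomials of length exactly `L` it forces `b` to be a nonzero constant and `deg a + L̃ ≤ L`.
Conversely every such combination lies in `M` and has degree `≤ L`.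
-/

open Polynomial

open scoped Classical

/-- Support of a polynomial vector: monomials `(degree, position)` ordered lexicographically,
which is the term-over-position (top) ordering. -/
noncomputable def vsupp {R : Type*} [CommRing R] {q : ℕ} (f : Fin q → R[X]) :
    Finset (Lex (ℕ × Fin q)) :=
  Finset.univ.biUnion fun i => (f i).support.image fun α => toLex (α, i)

/-- Leading monomial w.r.t. the top ordering (`⊥` for the zero vector). -/
noncomputable def vlm {R : Type*} [CommRing R] {q : ℕ} (f : Fin q → R[X]) :
    WithBot (Lex (ℕ × Fin q)) := (vsupp f).max

/-- Degree of the leading monomial (junk value `0` for the zero vector). -/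
noncomputable def vdeg {R : Type*} [CommRing R] {q : ℕ} (f : Fin q → R[X]) : ℕ :=
  WithBot.unbotD 0 ((vlm f).map fun m => (ofLex m).1)

/-- Leading position. -/
noncomputable def vlpos {R : Type*} [CommRing R] {q : ℕ} (f : Fin q → R[X]) : WithBot (Fin q) :=
  (vlm f).map fun m => (ofLex m).2

/-- Leading coefficient. -/
noncomputable def vlc {R : Type*} [CommRing R] {q : ℕ} (f : Fin q → R[X]) : R :=
  WithBot.unbotD 0 ((vlm f).map fun m => (f (ofLex m).2).coeff (ofLex m).1)

/-- Leading term of a polynomial vector, as a polynomial vector. -/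
noncomputable def vlt {R : Type*} [CommRing R] {q : ℕ} (f : Fin q → R[X]) : Fin q → R[X] :=
  WithBot.unbotD 0 ((vlm f).map fun m => fun j : Fin q =>
    if j = (ofLex m).2 then C ((f (ofLex m).2).coeff (ofLex m).1) * X ^ (ofLex m).1 else 0)

/-- The leading term submodule `L(F)`. -/
noncomputable def ltSubmodule {R : Type*} [CommRing R] {q : ℕ} (S : Set (Fin q → R[X])) :
    Submodule R[X] (Fin q → R[X]) :=
  Submodule.span R[X] (vlt '' S)

/-- `G` is a Gröbner basis of `M`: `G ⊆ M` and `L(G) = L(M)`. -/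
def IsGroebner {R : Type*} [CommRing R] {q : ℕ} (M : Submodule R[X] (Fin q → R[X]))
    (G : Finset (Fin q → R[X])) : Prop :=
  (G : Set (Fin q → R[X])) ⊆ M ∧
    ltSubmodule (G : Set (Fin q → R[X])) = ltSubmodule (M : Set (Fin q → R[X]))

/-- One-step reduction of `f` to `h` modulo the finite set `Fs` (Adams–Loustaunau Def. 4.1.1). -/
def ReducesOneStep {R : Type*} [CommRing R] {q : ℕ} (Fs : Finset (Fin q → R[X]))
    (f h : Fin q → R[X]) : Prop :=
  f ≠ 0 ∧ ∃ (m : ℕ) (jv : Fin m → Fin q → R[X]) (α : Fin m → ℕ) (β : Fin m → R),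
    0 < m ∧ (∀ i, jv i ∈ Fs) ∧ (∀ i, jv i ≠ 0) ∧ Function.Injective jv ∧ (∀ i, β i ≠ 0) ∧
    (∀ i, vlm f = (vlm (jv i)).map fun mm => toLex (α i + (ofLex mm).1, (ofLex mm).2)) ∧
    vlt f = ∑ i, (C (β i) * X ^ α i) • vlt (jv i) ∧
    h = f - ∑ i, (C (β i) * X ^ α i) • jv i

/-- Minimal Gröbner basis: a Gröbner basis each of whose elements is irreducible
modulo the others. -/
def IsMinimalGroebner {R : Type*} [CommRing R] {q : ℕ} (M : Submodule R[X] (Fin q → R[X]))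
    (G : Finset (Fin q → R[X])) : Prop :=
  IsGroebner M G ∧ ∀ g ∈ G, ∀ h, ¬ ReducesOneStep (G.erase g) g h

/-- `l = λ_0 + λ_1 x + ⋯ + λ_L x^L` is a feedback polynomial of length `L` for `S_1,…,S_N`:
`λ_0 ≠ 0` and `λ_0 S_{L+j} + ∑_{i=1}^L λ_i S_{L+j-i} = 0` for `j = 1,…,N-L`. -/
def IsFeedback {F : Type*} [Field F] (S : ℕ → F) (N L : ℕ) (l : Polynomial F) : Prop :=
  l.coeff 0 ≠ 0 ∧ l.natDegree ≤ L ∧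
    ∀ j, 1 ≤ j → j ≤ N - L → ∑ i ∈ Finset.range (L + 1), l.coeff i * S (L + j - i) = 0

section LeadingMonomial

variable {R : Type*} [CommRing R] {q : ℕ}

theorem mem_vsupp {f : Fin q → R[X]} {d : ℕ} {j : Fin q} :
    toLex (d, j) ∈ vsupp f ↔ (f j).coeff d ≠ 0 := by
  simp [vsupp]

theorem vlm_eq_sup (f : Fin q → R[X]) :
    vlm f = Finset.univ.sup fun i => (f i).degree.map fun d => toLex (d, i) := by
  rw [vlm, Finset.max_eq_sup_withBot, vsupp, Finset.sup_biUnion]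
  refine Finset.sup_congr rfl fun i _ => ?_
  have hmono : Monotone fun d : ℕ => toLex (d, i) := fun _ _ h => Prod.Lex.toLex_mono ⟨h, le_rfl⟩
  rw [Finset.sup_image, degree, Finset.max_eq_sup_withBot,
    Finset.apply_sup_eq_sup_comp_of_linearOrder (WithBot.map _) hmono.withBot_map rfl]
  rfl

theorem vlm_eq_bot {f : Fin q → R[X]} : vlm f = ⊥ ↔ f = 0 := by
  simp [vlm_eq_sup, funext_iff]

theorem exists_vlm_eq_coe {f : Fin q → R[X]} (hf : f ≠ 0) :
    ∃ (d : ℕ) (j : Fin q), vlm f = ↑(toLex (d, j)) := by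
  obtain ⟨m, hm⟩ := WithBot.ne_bot_iff_exists.1 (mt vlm_eq_bot.1 hf)
  exact ⟨(ofLex m).1, (ofLex m).2, hm.symm⟩

theorem coeff_ne_zero_of_vlm_eq_coe {f : Fin q → R[X]} {d : ℕ} {j : Fin q}
    (h : vlm f = ↑(toLex (d, j))) : (f j).coeff d ≠ 0 :=
  mem_vsupp.1 (Finset.mem_of_max h)

theorem vlt_eq_single {f : Fin q → R[X]} {d : ℕ} {j : Fin q} (h : vlm f = ↑(toLex (d, j))) :
    vlt f = Pi.single j (C ((f j).coeff d) * X ^ d) := by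
  funext i
  by_cases hi : i = j <;> simp [vlt, h, hi]

theorem vlm_neg (f : Fin q → R[X]) : vlm (-f) = vlm f := by
  simp [vlm_eq_sup]

theorem vlm_add_le (f g : Fin q → R[X]) : vlm (f + g) ≤ max (vlm f) (vlm g) := by
  rw [vlm_eq_sup, vlm_eq_sup, vlm_eq_sup, Finset.sup_le_iff]
  intro i _
  have hmono : Monotone fun d : ℕ => toLex (d, i) := fun _ _ h => Prod.Lex.toLex_mono ⟨h, le_rfl⟩
  calc ((f i + g i).degree.map fun d => toLex (d, i))
      ≤ (max (f i).degree (g i).degree).map fun d => toLex (d, i) :=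
        hmono.withBot_map (degree_add_le _ _)
    _ = max ((f i).degree.map fun d => toLex (d, i)) ((g i).degree.map fun d => toLex (d, i)) :=
        hmono.withBot_map.map_max
    _ ≤ _ := max_le_max (Finset.le_sup (f := fun i => (f i).degree.map fun d => toLex (d, i))
        (Finset.mem_univ i)) (Finset.le_sup (f := fun i => (g i).degree.map fun d => toLex (d, i))
        (Finset.mem_univ i))

theorem vlm_sub_lt {f g : Fin q → R[X]} {d : ℕ} {j : Fin q} (hf : vlm f = ↑(toLex (d, j)))
    (hg : vlm g = ↑(toLex (d, j))) (hc : (f j).coeff d = (g j).coeff d) :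
    vlm (f - g) < ↑(toLex (d, j)) := by
  refine lt_of_le_of_ne ?_ fun h => coeff_ne_zero_of_vlm_eq_coe h (by simp [hc])
  simpa [sub_eq_add_neg, vlm_neg, hf, hg] using vlm_add_le f (-g)

theorem monotone_unbotD_map_fst :
    Monotone fun m : WithBot (Lex (ℕ × Fin q)) => (m.map fun x => (ofLex x).1).unbotD 0 := by
  intro a b h
  induction a with
  | bot => simp
  | coe a =>
    induction b with
    | bot => simp at h
    | coe b => simpa using Prod.Lex.monotone_fst _ _ (WithBot.coe_le_coe.1 h)

theorem vdeg_le_vdeg {f g : Fin q → R[X]} (h : vlm f ≤ vlm g) : vdeg f ≤ vdeg g :=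
  monotone_unbotD_map_fst h

theorem vdeg_of_vlm_eq_coe {f : Fin q → R[X]} {d : ℕ} {j : Fin q}
    (h : vlm f = ↑(toLex (d, j))) : vdeg f = d := by
  simp [vdeg, h]

theorem vdeg_eq_sup (f : Fin q → R[X]) : vdeg f = Finset.univ.sup fun i => (f i).natDegree := by
  rw [vdeg, vlm_eq_sup, Finset.apply_sup_eq_sup_comp_of_linearOrder _ monotone_unbotD_map_fst rfl]
  refine Finset.sup_congr rfl fun i _ => ?_
  simp only [Function.comp_apply, WithBot.map_map, Function.comp_def, ofLex_toLex]
  exact congrArg (WithBot.unbotD 0) (congrFun WithBot.map_id _)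

theorem vdeg_le_iff {f : Fin q → R[X]} {L : ℕ} : vdeg f ≤ L ↔ ∀ i, (f i).natDegree ≤ L := by
  simp [vdeg_eq_sup]

theorem vdeg_add_le (f g : Fin q → R[X]) : vdeg (f + g) ≤ max (vdeg f) (vdeg g) :=
  vdeg_le_iff.2 fun i => (natDegree_add_le _ _).trans <|
    max_le_max (vdeg_le_iff.1 le_rfl i) (vdeg_le_iff.1 le_rfl i)

theorem vdeg_smul_le (a : R[X]) (f : Fin q → R[X]) : vdeg (a • f) ≤ a.natDegree + vdeg f :=
  vdeg_le_iff.2 fun i => (natDegree_mul_le (p := a)).trans <|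
    Nat.add_le_add_left (vdeg_le_iff.1 le_rfl i) _

theorem vlm_smul [IsDomain R] {a : R[X]} (ha : a ≠ 0) (f : Fin q → R[X]) :
    vlm (a • f) = (vlm f).map fun m => toLex (a.natDegree + (ofLex m).1, (ofLex m).2) := by
  have hmono :
      Monotone fun m : Lex (ℕ × Fin q) => toLex (a.natDegree + (ofLex m).1, (ofLex m).2) := by
    intro m m' h
    rcases Prod.Lex.le_iff.1 h with h | ⟨h₁, h₂⟩
    · exact Prod.Lex.le_iff.2 (Or.inl (Nat.add_lt_add_left h _))
    · exact Prod.Lex.le_iff.2 (Or.inr ⟨congrArg (a.natDegree + ·) h₁, h₂⟩)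
  rw [vlm_eq_sup, vlm_eq_sup, Finset.apply_sup_eq_sup_comp_of_linearOrder _ hmono.withBot_map rfl]
  refine Finset.sup_congr rfl fun i _ => ?_
  rw [Function.comp_apply, Pi.smul_apply, smul_eq_mul, degree_mul, degree_eq_natDegree ha]
  cases (f i).degree <;> rfl

theorem vdeg_smul [IsDomain R] {a : R[X]} (ha : a ≠ 0) {f : Fin q → R[X]} (hf : f ≠ 0) :
    vdeg (a • f) = a.natDegree + vdeg f := by
  obtain ⟨d, j, h⟩ := exists_vlm_eq_coe hf
  rw [vdeg_of_vlm_eq_coe h, vdeg_of_vlm_eq_coe (d := a.natDegree + d) (j := j)]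
  simp [vlm_smul ha, h]

end LeadingMonomial

section Groebner

theorem exists_vlm_dvd_of_vlt_mem_span {R : Type*} [CommRing R] {q : ℕ}
    {G : Set (Fin q → R[X])} {f : Fin q → R[X]} {d : ℕ} {j : Fin q}
    (hf : vlm f = ↑(toLex (d, j))) (hG : vlt f ∈ Submodule.span R[X] (vlt '' G)) :
    ∃ g ∈ G, ∃ e ≤ d, vlm g = ↑(toLex (e, j)) := by
  by_contra! hcon
  -- otherwise the `j`-th entry of every `vlt g` lies in the ideal `(X ^ (d + 1))`, hence so would
  -- the `j`-th entry `C c * X ^ d` (with `c ≠ 0`) of `vlt f`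
  let P : Submodule R[X] (Fin q → R[X]) := Submodule.comap
    (LinearMap.proj j : (Fin q → R[X]) →ₗ[R[X]] R[X]) (Ideal.span {X ^ (d + 1)})
  have hP : Submodule.span R[X] (vlt '' G) ≤ P := by
    rw [Submodule.span_le]
    rintro _ ⟨g, hg, rfl⟩
    simp only [P, SetLike.mem_coe, Submodule.mem_comap, LinearMap.proj_apply,
      Ideal.mem_span_singleton]
    rcases eq_or_ne g 0 with rfl | hg0
    · simp [vlt, vlm_eq_bot.2 rfl]
    obtain ⟨e, i, hgi⟩ := exists_vlm_eq_coe hg0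
    rw [vlt_eq_single hgi, Pi.single_apply]
    split_ifs with hij
    · subst hij
      exact dvd_mul_of_dvd_right (pow_dvd_pow (X : R[X]) (not_le.1 fun h => hcon g hg e h hgi)) _
    · exact dvd_zero _
  have hdvd := hP hG
  simp only [P, Submodule.mem_comap, LinearMap.proj_apply, Ideal.mem_span_singleton,
    vlt_eq_single hf, Pi.single_eq_same] at hdvd
  exact coeff_ne_zero_of_vlm_eq_coe hf (by simpa using X_pow_dvd_iff.1 hdvd d (by omega))

variable {K : Type*} [Field K] {q : ℕ}

theorem exists_sum_smul_of_isGroebner {M : Submodule K[X] (Fin q → K[X])}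
    {G : Finset (Fin q → K[X])} (hG : IsGroebner M G) {v : Fin q → K[X]} (hv : v ∈ M) :
    ∃ c : (Fin q → K[X]) → K[X], v = ∑ g ∈ G, c g • g ∧ ∀ g ∈ G, vlm (c g • g) ≤ vlm v := by
  induction hm : vlm v using WellFoundedLT.induction generalizing v with
  | _ m ih =>
  subst hm
  rcases eq_or_ne v 0 with rfl | hv0
  · exact ⟨0, by simp, by simp⟩
  obtain ⟨d, j, hvd⟩ := exists_vlm_eq_coe hv0
  have hvG : vlt v ∈ ltSubmodule (G : Set (Fin q → K[X])) :=
    hG.2 ▸ Submodule.subset_span ⟨v, hv, rfl⟩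
  obtain ⟨g, hgG : g ∈ G, e, hed, hge⟩ := exists_vlm_dvd_of_vlt_mem_span hvd hvG
  have hge0 := coeff_ne_zero_of_vlm_eq_coe hge
  set t := C ((v j).coeff d / (g j).coeff e) * X ^ (d - e) with ht
  have ht0 : (v j).coeff d / (g j).coeff e ≠ 0 :=
    div_ne_zero (coeff_ne_zero_of_vlm_eq_coe hvd) hge0
  have htg : vlm (t • g) = ↑(toLex (d, j)) := by
    rw [vlm_smul (mul_ne_zero (C_ne_zero.2 ht0) (pow_ne_zero _ X_ne_zero)), hge,
      natDegree_C_mul_X_pow _ _ ht0]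
    simp [Nat.sub_add_cancel hed]
  have htc : (v j).coeff d = ((t • g) j).coeff d := by
    rw [Pi.smul_apply, smul_eq_mul, ht, mul_assoc, coeff_C_mul, coeff_X_pow_mul',
      if_pos (Nat.sub_le d e), Nat.sub_sub_self hed, div_mul_cancel₀ _ hge0]
  have hlt : vlm (v - t • g) < vlm v := hvd ▸ vlm_sub_lt hvd htg htc
  obtain ⟨c, hc, hcv⟩ := ih _ hlt (M.sub_mem hv (M.smul_mem t (hG.1 hgG))) rfl
  refine ⟨c + Pi.single g t, ?_, fun g' hg' => ?_⟩
  · simp [add_smul, Finset.sum_add_distrib, ← hc, Pi.single_apply, hgG]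
  · rw [Pi.add_apply, add_smul]
    refine (vlm_add_le _ _).trans (max_le ((hcv g' hg').trans hlt.le) ?_)
    rcases eq_or_ne g' g with rfl | hne
    · rw [Pi.single_eq_same, htg, hvd]
    · simp [Pi.single_eq_of_ne hne, vlm_eq_bot.2]

theorem exists_smul_add_smul_of_isGroebner_pair {M : Submodule K[X] (Fin q → K[X])}
    {g₁ g₂ : Fin q → K[X]} (hne : g₁ ≠ g₂) (hG : IsGroebner M {g₁, g₂}) {v : Fin q → K[X]}
    (hv : v ∈ M) :
    ∃ a b : K[X], v = a • g₁ + b • g₂ ∧ vlm (a • g₁) ≤ vlm v ∧ vlm (b • g₂) ≤ vlm v := by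
  obtain ⟨c, hc, hcv⟩ := exists_sum_smul_of_isGroebner hG hv
  exact ⟨c g₁, c g₂, by rwa [Finset.sum_pair hne] at hc, hcv _ (by simp), hcv _ (by simp)⟩

end Groebner

theorem exists_natDegree_le_X_pow_dvd_add_iff {R : Type*} [CommRing R] (p : R[X]) (L n : ℕ) :
    (∃ r : R[X], r.natDegree ≤ L ∧ X ^ n ∣ r + p) ↔ ∀ k, L < k → k < n → p.coeff k = 0 := by
  constructor
  · rintro ⟨r, hr, hdvd⟩ k hLk hkn
    simpa [coeff_eq_zero_of_natDegree_lt (hr.trans_lt hLk)] using X_pow_dvd_iff.1 hdvd k hkn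
  · intro h
    refine ⟨-∑ k ∈ Finset.range (L + 1), monomial k (p.coeff k), ?_, X_pow_dvd_iff.2 fun k hk => ?_⟩
    · rw [natDegree_neg]
      exact natDegree_sum_le_of_forall_le _ _ fun k hk =>
        (natDegree_monomial_le _).trans (Finset.mem_range_succ_iff.1 hk)
    · by_cases hkL : k ≤ L
      · simp [coeff_monomial, Nat.lt_succ_of_le hkL]
      · simp [coeff_monomial, hkL, h k (not_le.1 hkL) hk]

section Feedback

variable {R : Type*} [CommRing R]

noncomputable def seqPoly (S : ℕ → R) (N : ℕ) : R[X] :=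
  ∑ i ∈ Finset.range N, C (S (i + 1)) * X ^ (i + 1)

noncomputable def feedbackModule (S : ℕ → R) (N : ℕ) : Submodule R[X] (Fin 2 → R[X]) :=
  Submodule.span R[X] {![X ^ (N + 1), 0], ![-seqPoly S N, 1]}

theorem coeff_seqPoly (S : ℕ → R) (N m : ℕ) :
    (seqPoly S N).coeff m = if 1 ≤ m ∧ m ≤ N then S m else 0 := by
  simp only [seqPoly, finsetSum_coeff, coeff_C_mul_X_pow]
  split_ifs with hm
  · rw [Finset.sum_eq_single_of_mem (m - 1) (by simp; omega) fun i _ hi => if_neg (by omega),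
      if_pos (by omega), Nat.sub_add_cancel hm.1]
  · exact Finset.sum_eq_zero fun i hi => if_neg (by simp at hi; omega)

theorem coeff_mul_seqPoly {S : ℕ → R} {N L k : ℕ} {l : R[X]} (hl : l.natDegree ≤ L)
    (hLk : L < k) (hkN : k ≤ N) :
    (l * seqPoly S N).coeff k = ∑ i ∈ Finset.range (L + 1), l.coeff i * S (k - i) := by
  rw [coeff_mul, Finset.Nat.sum_antidiagonal_eq_sum_range_succ_mk,
    ← Finset.sum_subset (Finset.range_subset_range.2 (by omega : L + 1 ≤ k + 1))]
  · refine Finset.sum_congr rfl fun i hi => ?_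
    rw [coeff_seqPoly, if_pos (by simp at hi; omega)]
  · intro i _ hi
    rw [coeff_eq_zero_of_natDegree_lt (by simp at hi; omega), zero_mul]

theorem mem_feedbackModule_iff {S : ℕ → R} {N : ℕ} {v : Fin 2 → R[X]} :
    v ∈ feedbackModule S N ↔ X ^ (N + 1) ∣ v 0 + v 1 * seqPoly S N := by
  rw [feedbackModule, Submodule.mem_span_pair]
  constructor
  · rintro ⟨a, b, rfl⟩
    exact ⟨a, by simp; ring⟩
  · rintro ⟨c, hc⟩
    refine ⟨c, v 1, funext (Fin.forall_fin_two.2 ⟨?_, by simp⟩)⟩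
    simp only [Pi.add_apply, Pi.smul_apply, smul_eq_mul, Matrix.cons_val_zero]
    linear_combination -hc

end Feedback

section ShortestFeedback

variable {F : Type*} [Field F] {S : ℕ → F} {N L : ℕ} {l : F[X]} {g₁ g₂ : Fin 2 → F[X]}

theorem isFeedback_iff_coeff_mul_seqPoly :
    IsFeedback S N L l ↔ l.coeff 0 ≠ 0 ∧ l.natDegree ≤ L ∧
      ∀ k, L < k → k < N + 1 → (l * seqPoly S N).coeff k = 0 := by
  refine and_congr_right fun _ => and_congr_right fun hl =>
    ⟨fun h k hLk hkN => ?_, fun h j hj hjN => ?_⟩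
  · rw [coeff_mul_seqPoly hl hLk (by omega)]
    simpa [Nat.add_sub_cancel' hLk.le] using h (k - L) (by omega) (by omega)
  · rw [← h (L + j) (by omega) (by omega), coeff_mul_seqPoly hl (by omega) (by omega)]

theorem isFeedback_iff_exists_mem :
    IsFeedback S N L l ↔ l.coeff 0 ≠ 0 ∧ ∃ v ∈ feedbackModule S N, v 1 = l ∧ vdeg v ≤ L := by
  rw [isFeedback_iff_coeff_mul_seqPoly, ← exists_natDegree_le_X_pow_dvd_add_iff]
  refine and_congr_right fun _ => ⟨?_, ?_⟩
  · rintro ⟨hl, r, hr, hdvd⟩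
    exact ⟨![r, l], mem_feedbackModule_iff.2 (by simpa using hdvd), rfl,
      vdeg_le_iff.2 (Fin.forall_fin_two.2 ⟨hr, hl⟩)⟩
  · rintro ⟨v, hv, rfl, hvL⟩
    exact ⟨vdeg_le_iff.1 hvL 1, v 0, vdeg_le_iff.1 hvL 0, mem_feedbackModule_iff.1 hv⟩

theorem exists_eq_mul_add_mul_of_isFeedback (hne : g₁ ≠ g₂)
    (hG : IsGroebner (feedbackModule S N) {g₁, g₂}) (h12 : (g₁ 1).coeff 0 = 0)
    (hl : IsFeedback S N L l) :
    ∃ a b : F[X], l = a * g₁ 1 + b * g₂ 1 ∧ b.coeff 0 ≠ 0 ∧ b.natDegree + vdeg g₂ ≤ L ∧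
      (a = 0 ∨ a.natDegree + vdeg g₁ ≤ L) := by
  obtain ⟨hl0, v, hv, rfl, hvL⟩ := isFeedback_iff_exists_mem.1 hl
  obtain ⟨a, b, rfl, ha, hb⟩ := exists_smul_add_smul_of_isGroebner_pair hne hG hv
  have hb0 : b.coeff 0 * (g₂ 1).coeff 0 ≠ 0 := by simpa [mul_coeff_zero, h12] using hl0
  have hg₂ : g₂ ≠ 0 := fun h => right_ne_zero_of_mul hb0 (by simp [h])
  have hdeg {c : F[X]} {g : Fin 2 → F[X]} (hc : c ≠ 0) (hg : g ≠ 0)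
      (h : vlm (c • g) ≤ vlm (a • g₁ + b • g₂)) : c.natDegree + vdeg g ≤ L :=
    vdeg_smul hc hg ▸ (vdeg_le_vdeg h).trans hvL
  have hbL := hdeg (fun h => left_ne_zero_of_mul hb0 (by simp [h])) hg₂ hb
  rcases eq_or_ne g₁ 0 with rfl | hg₁
  · exact ⟨0, b, by simp, left_ne_zero_of_mul hb0, hbL, Or.inl rfl⟩
  · exact ⟨a, b, by simp, left_ne_zero_of_mul hb0, hbL,
      (eq_or_ne a 0).imp_right fun ha0 => hdeg ha0 hg₁ ha⟩

theorem isFeedback_C_mul_add_mul (hg₁ : g₁ ∈ feedbackModule S N) (hg₂ : g₂ ∈ feedbackModule S N)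
    (h12 : (g₁ 1).coeff 0 = 0) (h22 : (g₂ 1).coeff 0 ≠ 0) {a : F} (ha : a ≠ 0) {b : F[X]}
    (hb : b = 0 ∨ b.natDegree + vdeg g₁ ≤ vdeg g₂) :
    IsFeedback S N (vdeg g₂) (C a * g₂ 1 + b * g₁ 1) := by
  refine isFeedback_iff_exists_mem.2 ⟨by simp [mul_coeff_zero, h12, ha, h22], C a • g₂ + b • g₁,
    add_mem (Submodule.smul_mem _ _ hg₂) (Submodule.smul_mem _ _ hg₁), by simp,
    (vdeg_add_le _ _).trans (max_le ?_ ?_)⟩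
  · simpa using vdeg_smul_le (C a) g₂
  · rcases hb with rfl | hb
    · simp [vdeg_eq_sup]
    · exact (vdeg_smul_le b g₁).trans hb

end ShortestFeedback

/-- Main field theorem: if `{g₁, g₂}` is a minimal Gröbner basis (top ordering) of the row
space of `[[x^(N+1),0],[-(S_N x^N + ⋯ + S_1 x),1]]` with `g₁₂(0) = 0`, `g₂₂(0) ≠ 0`,
`L̃ = deg g₁` and `L = deg g₂`, then `L` is the complexity of the sequence, `g₂₂` is a
shortest feedback polynomial, and the shortest feedback polynomials are exactly the
`a g₂₂ + b g₁₂` with `a ≠ 0` and `deg b ≤ L − L̃`. -/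
theorem field_shortest_feedback_param {F : Type*} [Field F] (S : ℕ → F) (N : ℕ)
    (g₁ g₂ : Fin 2 → Polynomial F) (hne : g₁ ≠ g₂)
    (hGB : IsMinimalGroebner
      (Submodule.span (Polynomial F)
        ({![X ^ (N + 1), 0],
          ![-(∑ i ∈ Finset.range N, C (S (i + 1)) * X ^ (i + 1)), 1]} :
          Set (Fin 2 → Polynomial F)))
      ({g₁, g₂} : Finset (Fin 2 → Polynomial F)))
    (h12 : (g₁ 1).coeff 0 = 0) (h22 : (g₂ 1).coeff 0 ≠ 0)
    (Lt L : ℕ) (hLt : Lt = vdeg g₁) (hL : L = vdeg g₂) :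
    IsFeedback S N L (g₂ 1) ∧
    (∀ L' l, IsFeedback S N L' l → L ≤ L') ∧
    (∀ l : Polynomial F, IsFeedback S N L l ↔
      ∃ (a : F) (b : Polynomial F), a ≠ 0 ∧ (b = 0 ∨ b.natDegree + Lt ≤ L) ∧
        l = C a * g₂ 1 + b * g₁ 1) := by
  have hG : IsGroebner (feedbackModule S N) {g₁, g₂} := hGB.1
  have hg₁ : g₁ ∈ feedbackModule S N := hG.1 (by simp)
  have hg₂ : g₂ ∈ feedbackModule S N := hG.1 (by simp)
  subst hLt hL
  refine ⟨by simpa using isFeedback_C_mul_add_mul hg₁ hg₂ h12 h22 one_ne_zero (Or.inl rfl),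
    fun L' l hl => ?_, fun l => ⟨fun hl => ?_, ?_⟩⟩
  · obtain ⟨-, b, -, -, hb, -⟩ := exists_eq_mul_add_mul_of_isFeedback hne hG h12 hl
    omega
  · obtain ⟨a, b, rfl, hb0, hb, ha⟩ := exists_eq_mul_add_mul_of_isFeedback hne hG h12 hl
    refine ⟨b.coeff 0, a, hb0, ha, ?_⟩
    rw [add_comm, ← eq_C_of_natDegree_eq_zero (by omega : b.natDegree = 0)]
  · rintro ⟨a, b, ha, hb, rfl⟩
    exact isFeedback_C_mul_add_mul hg₁ hg₂ h12 h22 ha hb
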